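/- If the set 𝐌 of binary measurement operators spans the space of Hermitian operators over the reals (informational completeness), then the associated seminorm ‖Δ‖_M = sup_{M∈𝐌}(2 tr(MΔ) − tr Δ) is a norm on the space of Hermitian operators; i.e., ‖Δ‖_M = 0 implies Δ = 0. -/

import Mathlib

/-! Under `M ↦ 1 - M` the objective `2 tr(MΔ) - tr Δ` changes sign, and it is bounded on `𝐌`
because `2Δ ≤ Δ² + 1`; so `‖Δ‖_M = 0` forces it to vanish on `𝐌`, and at `M = 0` this gives
`tr Δ = 0`, hence `tr(MΔ) = 0` for all `M ∈ 𝐌`. By informational completeness `tr(AΔ) = 0`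
for every Hermitian `A`, in particular `tr(ΔᴴΔ) = tr(Δ²) = 0`, so `Δ = 0`. -/

open Matrix
open scoped ComplexOrder

namespace QSVQDH

variable {d : ℕ}

/-- Schatten 1-norm (trace norm). -/
noncomputable def trNorm (A : Matrix (Fin d) (Fin d) ℂ) : ℝ :=
  ((Matrix.posSemidef_conjTranspose_mul_self A).isHermitian.eigenvectorUnitary.1 *
    diagonal ((fun x : ℝ => (x : ℂ)) ∘ (Real.sqrt ·) ∘ (Matrix.posSemidef_conjTranspose_mul_self A).isHermitian.eigenvalues) *
    (star (Matrix.posSemidef_conjTranspose_mul_self A).isHermitian.eigenvectorUnitary :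
      Matrix (Fin d) (Fin d) ℂ)).trace.re

/-- Schatten 2-norm (Hilbert–Schmidt norm). -/
noncomputable def hsNorm (A : Matrix (Fin d) (Fin d) ℂ) : ℝ :=
  Real.sqrt ((Aᴴ * A).trace.re)

/-- Operator norm. -/
noncomputable def opNorm (A : Matrix (Fin d) (Fin d) ℂ) : ℝ :=
  ‖Matrix.toEuclideanCLM (𝕜 := ℂ) A‖

/-- Density operator: positive semidefinite with unit trace. -/
def IsDensity (ρ : Matrix (Fin d) (Fin d) ℂ) : Prop := ρ.PosSemidef ∧ ρ.trace = 1

/-- POVM element: 0 ≤ M ≤ I. -/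
def IsPOVMElem (M : Matrix (Fin d) (Fin d) ℂ) : Prop := M.PosSemidef ∧ (1 - M).PosSemidef

/-- A measurement class of binary effects: contains 0, consists of POVM elements,
is convex, and is closed under M ↦ I − M. -/
def IsMClass (Mset : Set (Matrix (Fin d) (Fin d) ℂ)) : Prop :=
  0 ∈ Mset ∧ (∀ M ∈ Mset, IsPOVMElem M) ∧ Convex ℝ Mset ∧ (∀ M ∈ Mset, 1 - M ∈ Mset)

/-- The M-seminorm ‖Δ‖_M = sup_{M ∈ Mset} (2 tr(MΔ) − tr Δ). -/
noncomputable def Mnorm (Mset : Set (Matrix (Fin d) (Fin d) ℂ))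
    (Δ : Matrix (Fin d) (Fin d) ℂ) : ℝ :=
  sSup ((fun M => 2 * (M * Δ).trace.re - Δ.trace.re) '' Mset)

/-- The ε-distinguishability ratio μ_{ρ,M}(ε). -/
noncomputable def mu (Mset : Set (Matrix (Fin d) (Fin d) ℂ))
    (ρ : Matrix (Fin d) (Fin d) ℂ) (ε : ℝ) : ℝ :=
  (1 / (2 * ε)) *
    sInf ((fun σ => Mnorm Mset (ρ - σ)) '' {σ | IsDensity σ ∧ 2 * ε ≤ trNorm (ρ - σ)})

/-- The ε-visibility γ_{V,M}(ε), where the subspace V is given by its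
orthogonal projector P. -/
noncomputable def gamma (Mset : Set (Matrix (Fin d) (Fin d) ℂ))
    (P : Matrix (Fin d) (Fin d) ℂ) (ε : ℝ) : ℝ :=
  (1 / ε) * sSup ((fun Ω =>
      sInf ((fun p : Matrix (Fin d) (Fin d) ℂ × Matrix (Fin d) (Fin d) ℂ =>
          (Ω * (p.1 - p.2)).trace.re) ''
        {p | IsDensity p.1 ∧ P * p.1 = p.1 ∧ IsDensity p.2 ∧ (p.2 * P).trace.re ≤ 1 - ε}))
    '' Mset)

/-- The ε-visibility in its minimax (minimum) form. -/
noncomputable def gammaMin (Mset : Set (Matrix (Fin d) (Fin d) ℂ))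
    (P : Matrix (Fin d) (Fin d) ℂ) (ε : ℝ) : ℝ :=
  sInf ((fun p : Matrix (Fin d) (Fin d) ℂ × Matrix (Fin d) (Fin d) ℂ =>
      (1 / (2 * ε)) * Mnorm Mset (p.1 - p.2)) ''
    {p | IsDensity p.1 ∧ P * p.1 = p.1 ∧ IsDensity p.2 ∧ (p.2 * P).trace.re ≤ 1 - ε})

/-- μ_{ρ,M}(1), defined through perfectly distinguishable (orthogonal) counterparts. -/
noncomputable def muone (Mset : Set (Matrix (Fin d) (Fin d) ℂ))
    (ρ : Matrix (Fin d) (Fin d) ℂ) : ℝ :=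
  (1 / 2) * sInf ((fun σ => Mnorm Mset (ρ - σ)) '' {σ | IsDensity σ ∧ (ρ * σ).trace = 0})

/-- The distinguishability ratio μ̂_{ρ,M}. -/
noncomputable def muhat (Mset : Set (Matrix (Fin d) (Fin d) ℂ))
    (ρ : Matrix (Fin d) (Fin d) ℂ) : ℝ :=
  sInf ((fun σ => Mnorm Mset (ρ - σ) / trNorm (ρ - σ)) '' {σ | IsDensity σ ∧ σ ≠ ρ})

open scoped MatrixOrder Matrix.Norms.L2Operator in
theorem trace_mul_nonneg_of_posSemidef {n 𝕜 : Type*} [Fintype n] [RCLike 𝕜]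
    {A B : Matrix n n 𝕜} (hA : A.PosSemidef) (hB : B.PosSemidef) : 0 ≤ (A * B).trace := by
  classical
  obtain ⟨C, rfl⟩ := CStarAlgebra.nonneg_iff_eq_star_mul_self.mp hB.nonneg
  rw [star_eq_conjTranspose, ← mul_assoc, trace_mul_comm]
  simpa only [mul_assoc] using (hA.mul_mul_conjTranspose_same C).trace_nonneg

theorem IsPOVMElem.re_trace_mul_le {M Q : Matrix (Fin d) (Fin d) ℂ} (hM : IsPOVMElem M)
    (hQ : Q.PosSemidef) : (M * Q).trace.re ≤ Q.trace.re := by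
  have := Complex.nonneg_iff.mp (trace_mul_nonneg_of_posSemidef hM.2 hQ)
  simpa [sub_mul, trace_sub] using this.1

theorem IsPOVMElem.two_mul_re_trace_mul_le {M Δ : Matrix (Fin d) (Fin d) ℂ} (hM : IsPOVMElem M)
    (hΔ : Δ.IsHermitian) : 2 * (M * Δ).trace.re ≤ (Δ * Δ + 1).trace.re := by
  have hsq : (Δ - 1)ᴴ * (Δ - 1) = Δ * Δ + 1 - 2 • Δ := by
    rw [conjTranspose_sub, hΔ.eq, conjTranspose_one]; noncomm_ring
  have hgap : 2 * (M * Δ).trace.re ≤ (M * (Δ * Δ + 1)).trace.re := by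
    have := trace_mul_nonneg_of_posSemidef hM.1 (hsq ▸ posSemidef_conjTranspose_mul_self (Δ - 1))
    rw [mul_sub, Matrix.mul_smul, trace_sub, trace_smul] at this
    simpa using (Complex.nonneg_iff.mp this).1
  have hle := hM.re_trace_mul_le ((posSemidef_conjTranspose_mul_self Δ).add PosSemidef.one)
  rw [hΔ.eq] at hle
  linarith

theorem bddAbove_Mnorm_image {Mset : Set (Matrix (Fin d) (Fin d) ℂ)}
    (hM : ∀ M ∈ Mset, IsPOVMElem M) {Δ : Matrix (Fin d) (Fin d) ℂ} (hΔ : Δ.IsHermitian) :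
    BddAbove ((fun M => 2 * (M * Δ).trace.re - Δ.trace.re) '' Mset) := by
  refine ⟨(Δ * Δ + 1).trace.re - Δ.trace.re, ?_⟩
  rintro _ ⟨M, hMm, rfl⟩
  linarith [(hM M hMm).two_mul_re_trace_mul_le hΔ]

theorem re_trace_mul_eq_zero_of_Mnorm_eq_zero {Mset : Set (Matrix (Fin d) (Fin d) ℂ)}
    (hM : IsMClass Mset) {Δ : Matrix (Fin d) (Fin d) ℂ} (hΔ : Δ.IsHermitian)
    (h0 : Mnorm Mset Δ = 0) : ∀ M ∈ Mset, (M * Δ).trace.re = 0 := by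
  obtain ⟨hzero, hPOVM, -, hcompl⟩ := hM
  have hle : ∀ M ∈ Mset, 2 * (M * Δ).trace.re - Δ.trace.re ≤ 0 := fun M hMm =>
    h0 ▸ le_csSup (bddAbove_Mnorm_image hPOVM hΔ) ⟨M, hMm, rfl⟩
  have hvanish : ∀ M ∈ Mset, 2 * (M * Δ).trace.re - Δ.trace.re = 0 := fun M hMm => by
    have := hle (1 - M) (hcompl M hMm)
    simp only [sub_mul, one_mul, trace_sub, Complex.sub_re] at this
    linarith [hle M hMm]
  have htrace : Δ.trace.re = 0 := by simpa using hvanish 0 hzero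
  intro M hMm
  linarith [hvanish M hMm]

theorem re_trace_mul_eq_zero_of_mem_span {S : Set (Matrix (Fin d) (Fin d) ℂ)}
    {Δ : Matrix (Fin d) (Fin d) ℂ} (hS : ∀ M ∈ S, (M * Δ).trace.re = 0)
    {A : Matrix (Fin d) (Fin d) ℂ} (hA : A ∈ Submodule.span ℝ S) : (A * Δ).trace.re = 0 := by
  induction hA using Submodule.span_induction with
  | mem M hM => exact hS M hM
  | zero => simp
  | add A B _ _ hA hB => simp [add_mul, hA, hB]
  | smul c A _ hA => simp [hA]

theorem eq_zero_of_isHermitian_of_re_trace_mul_self_eq_zero {Δ : Matrix (Fin d) (Fin d) ℂ}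
    (hΔ : Δ.IsHermitian) (h : (Δ * Δ).trace.re = 0) : Δ = 0 := by
  have hnonneg := (posSemidef_conjTranspose_mul_self Δ).trace_nonneg
  rw [hΔ.eq] at hnonneg
  refine trace_conjTranspose_mul_self_eq_zero_iff.mp ?_
  rw [hΔ.eq]
  exact Complex.ext h (Complex.nonneg_iff.mp hnonneg).2.symm

/-- if Mset spans the Hermitian operators over ℝ (informational completeness),
then the M-seminorm is a norm on Hermitian operators: ‖Δ‖_M = 0 implies Δ = 0. -/
theorem Mnorm_norm_of_informationallyComplete (Mset : Set (Matrix (Fin d) (Fin d) ℂ))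
    (hM : IsMClass Mset)
    (hspan : ∀ A : Matrix (Fin d) (Fin d) ℂ, A.IsHermitian → A ∈ Submodule.span ℝ Mset) :
    ∀ Δ : Matrix (Fin d) (Fin d) ℂ, Δ.IsHermitian → Mnorm Mset Δ = 0 → Δ = 0 := by
  intro Δ hΔ h0
  have hker := re_trace_mul_eq_zero_of_Mnorm_eq_zero hM hΔ h0
  exact eq_zero_of_isHermitian_of_re_trace_mul_self_eq_zero hΔ
    (re_trace_mul_eq_zero_of_mem_span hker (hspan Δ hΔ))

end QSVQDH
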